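/- Let N ≥ 2, let k be an integer with 0 < k < N, let X₁,…,X_N ∈ ℝ be samples, and let x ∈ ℝᴺ have pairwise distinct coordinates. For τ > 0, let w(τ) ∈ (0,1)ᴺ be the unique minimizer of −xᵀy − τ·H_b(y) over {y ∈ ℝᴺ : 0 < yᵢ < 1, Σᵢ yᵢ = k}, and let I := {i : xᵢ is among the k largest coordinates of x}. Then as τ → 0⁺, the weighted mean μ(τ) := (1/k)·Σᵢ w(τ)ᵢ·Xᵢ converges to the elite mean (1/k)·Σ_{i∈I} Xᵢ, and the weighted variance σ²(τ) := (1/k)·Σᵢ w(τ)ᵢ·(Xᵢ − μ(τ))² converges to the elite variance (1/k)·Σ_{i∈I} (Xᵢ − (1/k)·Σ_{j∈I} Xⱼ)². In other words, the DCEM Gaussian update converges to the CEM Gaussian update as the temperature goes to 0. -/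

import Mathlib

/-!
The entropy term lies in `[0, N log 2]`, so the soft top-`k` weights `w τ` are `τ N log 2`-optimal
for the linear objective `y ↦ ∑ xᵢ yᵢ` on the polytope `{0 < y < 1, ∑ y = k}`, whose supremum is
its value `∑_{i ∈ I} xᵢ` at the vertex `𝟙_I` on the boundary. The top-`k` values of `x` exceed
all others by some gap `δ > 0`, so every unit of mass that `w τ` puts outside `I` costs at least
`δ`; hence that mass is at most `τ N log 2 / δ`, and `w τ → 𝟙_I`. The weighted mean and variance
are continuous in the weights, and at `𝟙_I` they are the elite mean and variance.
-/

open Finset Filter Topology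

/-- The binary entropy function `H_b(y) = -∑ i, [y i log (y i) + (1 - y i) log (1 - y i)]`. -/
noncomputable def binEntropy {N : ℕ} (y : Fin N → ℝ) : ℝ :=
  -(∑ i, (y i * Real.log (y i) + (1 - y i) * Real.log (1 - y i)))

lemma binEntropy_eq_sum {N : ℕ} (y : Fin N → ℝ) : binEntropy y = ∑ i, Real.binEntropy (y i) := by
  rw [binEntropy, ← sum_neg_distrib]
  refine sum_congr rfl fun i _ => ?_
  rw [Real.binEntropy, Real.log_inv, Real.log_inv]
  ring

lemma binEntropy_nonneg {N : ℕ} {y : Fin N → ℝ} (hy : ∀ i, y i ∈ Set.Icc 0 1) :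
    0 ≤ binEntropy y := by
  rw [binEntropy_eq_sum]
  exact sum_nonneg fun i _ => Real.binEntropy_nonneg (hy i).1 (hy i).2

lemma binEntropy_le_mul_log_two {N : ℕ} (y : Fin N → ℝ) : binEntropy y ≤ N * Real.log 2 := by
  rw [binEntropy_eq_sum]
  simpa using sum_le_sum fun i (_ : i ∈ univ) => Real.binEntropy_le_log_two (p := y i)

lemma sum_mul_le_of_regularized_minimizer {N : ℕ} {x w z : Fin N → ℝ} {τ : ℝ} (hτ : 0 < τ)
    (hmin : z ≠ w → -(∑ i, x i * w i) - τ * binEntropy w < -(∑ i, x i * z i) - τ * binEntropy z)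
    (hz : ∀ i, z i ∈ Set.Icc 0 1) :
    ∑ i, x i * z i ≤ ∑ i, x i * w i + τ * (N * Real.log 2) := by
  rcases eq_or_ne z w with rfl | hne
  · exact le_add_of_nonneg_right (by positivity)
  · have hHw := mul_le_mul_of_nonneg_left (binEntropy_le_mul_log_two w) hτ.le
    have hHz := mul_nonneg hτ.le (binEntropy_nonneg hz)
    linarith [hmin hne]

section Rank

variable {ι α : Type*} [Fintype ι] [LinearOrder α]

/-- `{i | numAbove x i < k}` is the set of indices of the `k` largest values of `x`. -/
def numAbove (x : ι → α) (i : ι) : ℕ := #{j | x i < x j}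

variable {x : ι → α} {i j : ι}

lemma numAbove_le_numAbove (h : x i ≤ x j) : numAbove x j ≤ numAbove x i :=
  card_le_card <| monotone_filter_right _ fun _ _ => h.trans_lt

lemma numAbove_lt_numAbove (h : x i < x j) : numAbove x j < numAbove x i := by
  refine card_lt_card <| (ssubset_iff_of_subset <| monotone_filter_right _
    fun _ _ => h.trans).2 ⟨j, ?_, ?_⟩ <;> simp [h]

lemma numAbove_lt_card : numAbove x i < Fintype.card ι :=
  card_lt_univ_of_notMem (x := i) (by simp)

lemma numAbove_injective (hx : Function.Injective x) : Function.Injective (numAbove x) := by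
  intro i j hij
  by_contra hne
  rcases (hx.ne hne).lt_or_gt with h | h
  · exact (numAbove_lt_numAbove h).ne' hij
  · exact (numAbove_lt_numAbove h).ne hij

lemma image_numAbove (hx : Function.Injective x) :
    univ.image (numAbove x) = range (Fintype.card ι) := by
  refine eq_of_subset_of_card_le (fun n hn => ?_) ?_
  · obtain ⟨i, -, rfl⟩ := mem_image.1 hn
    exact mem_range.2 numAbove_lt_card
  · rw [card_image_of_injective _ (numAbove_injective hx), card_range, card_univ]

lemma card_numAbove_lt (hx : Function.Injective x) {k : ℕ} (hk : k ≤ Fintype.card ι) :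
    #{i | numAbove x i < k} = k := by
  have hrange : (range (Fintype.card ι)).filter (· < k) = range k := by
    ext n
    simp only [mem_filter, mem_range]
    omega
  calc #{i | numAbove x i < k} = #((univ.filter fun i => numAbove x i < k).image (numAbove x)) :=
        (card_image_of_injective _ (numAbove_injective hx)).symm
    _ = #(range k) := by rw [← hrange, ← image_numAbove hx, filter_image]
    _ = k := card_range k

lemma lt_of_numAbove_lt_of_le {k : ℕ} (hi : numAbove x i < k) (hj : k ≤ numAbove x j) :
    x j < x i :=
  lt_of_not_ge fun h => (numAbove_le_numAbove h).not_gt (hi.trans_le hj)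

end Rank

section Vertex

variable {ι : Type*} [Fintype ι] [DecidableEq ι] {I : Finset ι} {y : ι → ℝ}

lemma sum_one_sub_eq_sum_compl (hsum : ∑ i, y i = #I) :
    ∑ i ∈ I, (1 - y i) = ∑ j ∈ Iᶜ, y j := by
  rw [sum_sub_distrib, sum_const, nsmul_one, ← hsum, ← sum_add_sum_compl I y]
  ring

lemma mul_sum_compl_le_sum_sub_sum_mul {x : ι → ℝ} {c δ : ℝ} (hxI : ∀ i ∈ I, c + δ ≤ x i)
    (hxIc : ∀ j ∈ Iᶜ, x j ≤ c) (hy : ∀ i, y i ∈ Set.Icc 0 1) (hsum : ∑ i, y i = #I) :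
    δ * ∑ j ∈ Iᶜ, y j ≤ ∑ i ∈ I, x i - ∑ i, x i * y i := by
  have hinside : (c + δ) * ∑ i ∈ I, (1 - y i) ≤ ∑ i ∈ I, x i * (1 - y i) := by
    rw [mul_sum]
    exact sum_le_sum fun i hi => mul_le_mul_of_nonneg_right (hxI i hi) (sub_nonneg.2 (hy i).2)
  have houtside : ∑ j ∈ Iᶜ, x j * y j ≤ c * ∑ j ∈ Iᶜ, y j := by
    rw [mul_sum]
    exact sum_le_sum fun j hj => mul_le_mul_of_nonneg_right (hxIc j hj) (hy j).1
  have hsplit : ∑ i ∈ I, x i - ∑ i, x i * y i =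
      ∑ i ∈ I, x i * (1 - y i) - ∑ j ∈ Iᶜ, x j * y j := by
    rw [← sum_add_sum_compl I fun i => x i * y i]
    simp only [mul_one_sub, sum_sub_distrib]
    ring
  rw [sum_one_sub_eq_sum_compl hsum] at hinside
  linarith

lemma abs_sub_ite_le_sum_compl (hy : ∀ i, y i ∈ Set.Icc 0 1) (hsum : ∑ i, y i = #I) (i : ι) :
    |y i - if i ∈ I then 1 else 0| ≤ ∑ j ∈ Iᶜ, y j := by
  split_ifs with hi
  · rw [abs_sub_comm, abs_of_nonneg (sub_nonneg.2 (hy i).2), ← sum_one_sub_eq_sum_compl hsum]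
    exact single_le_sum (f := fun j => 1 - y j) (fun j _ => sub_nonneg.2 (hy j).2) hi
  · rw [sub_zero, abs_of_nonneg (hy i).1]
    exact single_le_sum (fun j _ => (hy j).1) (mem_compl.2 hi)

lemma tendsto_ite_of_sum_le {α : Type*} {l : Filter α} {x : ι → ℝ} {c δ : ℝ} (hδ : 0 < δ)
    (hxI : ∀ i ∈ I, c + δ ≤ x i) (hxIc : ∀ j ∈ Iᶜ, x j ≤ c) {w : α → ι → ℝ} {ε : α → ℝ}
    (hε : Tendsto ε l (𝓝 0))
    (hw : ∀ᶠ t in l, (∀ i, w t i ∈ Set.Icc 0 1) ∧ ∑ i, w t i = #I ∧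
      ∑ i ∈ I, x i ≤ ∑ i, x i * w t i + ε t) :
    Tendsto w l (𝓝 fun i => if i ∈ I then 1 else 0) := by
  refine tendsto_pi_nhds.2 fun i => tendsto_iff_norm_sub_tendsto_zero.2 ?_
  refine squeeze_zero' (Eventually.of_forall fun _ => norm_nonneg _) ?_
    (by simpa using hε.div_const δ)
  filter_upwards [hw] with t ⟨hwt, hsum, hopt⟩
  have hgap := mul_sum_compl_le_sum_sub_sum_mul hxI hxIc hwt hsum
  calc ‖w t i - if i ∈ I then 1 else 0‖ ≤ ∑ j ∈ Iᶜ, w t j := abs_sub_ite_le_sum_compl hwt hsum i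
    _ ≤ ε t / δ := by rw [le_div_iff₀ hδ]; linarith

lemma ite_mem_closure (hI₀ : 0 < #I) (hI : #I < Fintype.card ι) :
    (fun i => if i ∈ I then (1 : ℝ) else 0) ∈
      closure {z : ι → ℝ | (∀ i, z i ∈ Set.Ioo 0 1) ∧ ∑ i, z i = #I} := by
  have hcard : (0 : ℝ) < Fintype.card ι := by exact_mod_cast hI₀.trans hI
  set p : ℝ := #I / Fintype.card ι
  have hp : p ∈ Set.Ioo 0 1 := ⟨by positivity, (div_lt_one hcard).2 (by exact_mod_cast hI)⟩
  -- The segment from the uniform point `p • 𝟙` to the vertex `𝟙_I` lies in the open polytope.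
  let z : ℝ → ι → ℝ := fun ε i => (1 - ε) * (if i ∈ I then 1 else 0) + ε * p
  have hz : Tendsto z (𝓝[>] 0) (𝓝 fun i => if i ∈ I then 1 else 0) := by
    refine tendsto_nhdsWithin_of_tendsto_nhds ?_
    simpa [z] using ((by fun_prop : Continuous z).tendsto 0)
  refine mem_closure_of_tendsto hz ?_
  filter_upwards [Ioo_mem_nhdsGT zero_lt_one] with ε ⟨hε₀, hε₁⟩
  refine ⟨fun i => ?_, ?_⟩
  · simp only [z]
    split_ifs <;> constructor <;> nlinarith [hp.1, hp.2]
  · simp only [z, p, mul_ite, mul_one, mul_zero, sum_add_distrib, sum_ite_mem, univ_inter,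
      sum_sub_distrib, sum_const, nsmul_eq_mul, card_univ]
    field_simp
    ring

lemma sum_le_of_forall_sum_mul_le (hI₀ : 0 < #I) (hI : #I < Fintype.card ι) {x : ι → ℝ} {b : ℝ}
    (h : ∀ z : ι → ℝ, (∀ i, z i ∈ Set.Ioo 0 1) → ∑ i, z i = #I → ∑ i, x i * z i ≤ b) :
    ∑ i ∈ I, x i ≤ b := by
  have hclosed : IsClosed {z : ι → ℝ | ∑ i, x i * z i ≤ b} :=
    isClosed_le (by fun_prop) continuous_const
  simpa using hclosed.closure_subset_iff.2 (fun z hz => h z hz.1 hz.2) (ite_mem_closure hI₀ hI)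

lemma exists_separating_gap (hI : I.Nonempty) (hIc : Iᶜ.Nonempty) {x : ι → ℝ}
    (h : ∀ i ∈ I, ∀ j ∈ Iᶜ, x j < x i) :
    ∃ c δ : ℝ, 0 < δ ∧ (∀ i ∈ I, c + δ ≤ x i) ∧ ∀ j ∈ Iᶜ, x j ≤ c :=
  ⟨Iᶜ.sup' hIc x, I.inf' hI x - Iᶜ.sup' hIc x,
    sub_pos.2 <| (sup'_lt_iff hIc).2 fun j hj => (lt_inf'_iff hI).2 fun i hi => h i hi j hj,
    fun _ hi => (add_sub_cancel _ _).trans_le (inf'_le x hi), fun _ hj => le_sup' x hj⟩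

end Vertex

theorem dcem_update_tendsto_cem_update_general (N k : ℕ) (hk0 : 0 < k) (hkN : k < N)
    (X : Fin N → ℝ) (x : Fin N → ℝ) (hdist : Function.Injective x)
    (w : ℝ → (Fin N → ℝ))
    (hw : ∀ τ : ℝ, 0 < τ →
      (∀ i, w τ i ∈ Set.Ioo (0 : ℝ) 1) ∧ (∑ i, w τ i) = k ∧
      (∀ z : Fin N → ℝ, (∀ i, z i ∈ Set.Ioo (0 : ℝ) 1) → (∑ i, z i) = k → z ≠ w τ →
        -(∑ i, x i * w τ i) - τ * binEntropy (w τ) <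
          -(∑ i, x i * z i) - τ * binEntropy z))
    (I : Finset (Fin N))
    (hI : I = Finset.univ.filter fun i => (Finset.univ.filter fun j => x i < x j).card < k) :
    Tendsto (fun τ : ℝ => (1 / (k : ℝ)) * ∑ i, w τ i * X i)
      (nhdsWithin 0 (Set.Ioi 0)) (nhds ((1 / (k : ℝ)) * ∑ i ∈ I, X i)) ∧
    Tendsto (fun τ : ℝ =>
        (1 / (k : ℝ)) * ∑ i, w τ i * (X i - (1 / (k : ℝ)) * ∑ j, w τ j * X j) ^ 2)
      (nhdsWithin 0 (Set.Ioi 0))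
      (nhds ((1 / (k : ℝ)) * ∑ i ∈ I, (X i - (1 / (k : ℝ)) * ∑ j ∈ I, X j) ^ 2)) := by
  have hcard : #I = k := by
    rw [hI]
    exact card_numAbove_lt hdist (by simpa using hkN.le)
  have hcard_lt : #I < Fintype.card (Fin N) := by simpa [hcard] using hkN
  have hsep : ∀ i ∈ I, ∀ j ∈ Iᶜ, x j < x i := by
    intro i hi j hj
    rw [hI, mem_compl, mem_filter, not_and, not_lt] at hj
    rw [hI, mem_filter] at hi
    exact lt_of_numAbove_lt_of_le hi.2 (hj (mem_univ j))
  obtain ⟨c, δ, hδ, hxI, hxIc⟩ := exists_separating_gap (card_pos.1 (hcard ▸ hk0))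
    (card_pos.1 (by rw [card_compl]; omega)) hsep
  have hopt : ∀ τ > 0, ∑ i ∈ I, x i ≤ ∑ i, x i * w τ i + τ * (N * Real.log 2) := fun τ hτ =>
    sum_le_of_forall_sum_mul_le (hcard ▸ hk0) hcard_lt fun z hz hzsum =>
      sum_mul_le_of_regularized_minimizer hτ ((hw τ hτ).2.2 z hz (hcard ▸ hzsum))
        fun i => Set.Ioo_subset_Icc_self (hz i)
  have hlim : Tendsto w (𝓝[>] 0) (𝓝 fun i => if i ∈ I then 1 else 0) := by
    refine tendsto_ite_of_sum_le hδ hxI hxIc (ε := fun τ => τ * (N * Real.log 2)) ?_ ?_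
    · simpa using ((continuous_mul_const (N * Real.log 2)).tendsto 0).mono_left nhdsWithin_le_nhds
    · filter_upwards [self_mem_nhdsWithin] with τ hτ
      exact ⟨fun i => Set.Ioo_subset_Icc_self ((hw τ hτ).1 i), hcard ▸ (hw τ hτ).2.1, hopt τ hτ⟩
  constructor
  · simpa [Function.comp_def] using ((by fun_prop : Continuous fun v : Fin N → ℝ =>
      (1 / (k : ℝ)) * ∑ i, v i * X i).tendsto _).comp hlim
  · simpa [Function.comp_def] using ((by fun_prop : Continuous fun v : Fin N → ℝ =>
      (1 / (k : ℝ)) * ∑ i, v i * (X i - (1 / (k : ℝ)) * ∑ j, v j * X j) ^ 2).tendsto _).comp hlim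

/-- The DCEM Gaussian update converges to the CEM Gaussian update as the temperature
`τ → 0⁺`: with `w τ` the unique minimizer of `-⟪x,y⟫ - τ·H_b(y)` over
`{y : 0 < yᵢ < 1, ∑ᵢ yᵢ = k}` (soft top-`k` weights, `x` having pairwise distinct
coordinates) and `I` the set of indices of the `k` largest coordinates of `x`, the
weighted mean `(1/k) ∑ᵢ w(τ)ᵢ Xᵢ` tends to the elite mean `(1/k) ∑_{i∈I} Xᵢ` and the
weighted variance tends to the elite variance. -/
theorem dcem_update_tendsto_cem_update (N k : ℕ) (hN : 2 ≤ N) (hk0 : 0 < k) (hkN : k < N)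
    (X : Fin N → ℝ) (x : Fin N → ℝ) (hdist : Function.Injective x)
    (w : ℝ → (Fin N → ℝ))
    (hw : ∀ τ : ℝ, 0 < τ →
      (∀ i, w τ i ∈ Set.Ioo (0 : ℝ) 1) ∧ (∑ i, w τ i) = k ∧
      (∀ z : Fin N → ℝ, (∀ i, z i ∈ Set.Ioo (0 : ℝ) 1) → (∑ i, z i) = k → z ≠ w τ →
        -(∑ i, x i * w τ i) - τ * binEntropy (w τ) <
          -(∑ i, x i * z i) - τ * binEntropy z))
    (I : Finset (Fin N))
    (hI : I = Finset.univ.filter fun i => (Finset.univ.filter fun j => x i < x j).card < k) :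
    Tendsto (fun τ : ℝ => (1 / (k : ℝ)) * ∑ i, w τ i * X i)
      (nhdsWithin 0 (Set.Ioi 0)) (nhds ((1 / (k : ℝ)) * ∑ i ∈ I, X i)) ∧
    Tendsto (fun τ : ℝ =>
        (1 / (k : ℝ)) * ∑ i, w τ i * (X i - (1 / (k : ℝ)) * ∑ j, w τ j * X j) ^ 2)
      (nhdsWithin 0 (Set.Ioi 0))
      (nhds ((1 / (k : ℝ)) * ∑ i ∈ I, (X i - (1 / (k : ℝ)) * ∑ j ∈ I, X j) ^ 2)) :=
  dcem_update_tendsto_cem_update_general N k hk0 hkN X x hdist w hw I hI
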